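/- Let X : [0,1] → H(n) be a smooth curve with X(0)=0 whose trace-norm length equals ‖X(1)‖₁, let D = X(1), and let P be a system of mutually orthogonal projections summing to I, each commuting with D. Then the pinched curve t ↦ C_P(X(t)) = Σ_j P_j X(t) P_j is also a minimal curve joining 0 to D, i.e., its trace-norm length equals ‖D‖₁. -/

import Mathlib

set_option maxHeartbeats 1000000
open Matrix


open scoped ComplexOrder

/-- The trace norm (Schatten 1-norm) of a complex matrix: `‖A‖₁ = tr |A|`. -/
noncomputable def traceNorm {m p : Type*} [Fintype m] [Fintype p] [DecidableEq p]
    (A : Matrix m p ℂ) : ℝ :=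
  (((Matrix.posSemidef_conjTranspose_mul_self A).1.eigenvectorUnitary.1 *
      Matrix.diagonal ((Complex.ofReal ·) ∘ (Real.sqrt ·) ∘ (Matrix.posSemidef_conjTranspose_mul_self A).1.eigenvalues) *
      (star (Matrix.posSemidef_conjTranspose_mul_self A).1.eigenvectorUnitary : Matrix p p ℂ)).trace).re

variable {n : ℕ}

lemma unit_cancel (U : Matrix.unitaryGroup (Fin n) ℂ) (C : Matrix (Fin n) (Fin n) ℂ) :
    star (U : Matrix (Fin n) (Fin n) ℂ) * ((U : Matrix (Fin n) (Fin n) ℂ) * C) = C := by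
  rw [← Matrix.mul_assoc, Matrix.mem_unitaryGroup_iff'.mp U.2, Matrix.one_mul]

lemma conj_mul_conj (U : Matrix.unitaryGroup (Fin n) ℂ) (A B : Matrix (Fin n) (Fin n) ℂ) :
    ((U : Matrix (Fin n) (Fin n) ℂ) * A * star (U : Matrix (Fin n) (Fin n) ℂ)) *
    ((U : Matrix (Fin n) (Fin n) ℂ) * B * star (U : Matrix (Fin n) (Fin n) ℂ)) =
    (U : Matrix (Fin n) (Fin n) ℂ) * (A * B) * star (U : Matrix (Fin n) (Fin n) ℂ) := by
  simp only [Matrix.mul_assoc, unit_cancel]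

lemma trace_unitary_conj (U : Matrix.unitaryGroup (Fin n) ℂ) (A : Matrix (Fin n) (Fin n) ℂ) :
    Matrix.trace ((U : Matrix (Fin n) (Fin n) ℂ) * A * star (U : Matrix (Fin n) (Fin n) ℂ)) = A.trace := by
  rw [Matrix.trace_mul_cycle, Matrix.mem_unitaryGroup_iff'.mp U.2, Matrix.one_mul]

lemma conj_psd (U : Matrix.unitaryGroup (Fin n) ℂ) {A : Matrix (Fin n) (Fin n) ℂ}
    (hA : A.PosSemidef) :
    ((U : Matrix (Fin n) (Fin n) ℂ) * A * star (U : Matrix (Fin n) (Fin n) ℂ)).PosSemidef := by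
  rw [Matrix.star_eq_conjTranspose]
  exact hA.mul_mul_conjTranspose_same _

lemma traceNorm_herm {M : Matrix (Fin n) (Fin n) ℂ} (hM : M.IsHermitian) :
    traceNorm M = ∑ i, |hM.eigenvalues i| := by
  have hMM : (Mᴴ * M).IsHermitian := (Matrix.posSemidef_conjTranspose_mul_self M).1
  have e1 : traceNorm M = (hMM.cfc Real.sqrt).trace.re := by
    rw [traceNorm, Matrix.IsHermitian.cfc, Unitary.conjStarAlgAut_apply]; rfl
  rw [e1, ← hMM.cfc_eq, hM.eq, ← pow_two, ← cfc_comp_pow (R := ℝ) Real.sqrt 2 M]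
  simp_rw [Real.sqrt_sq_eq_abs]
  rw [hM.cfc_eq, Matrix.IsHermitian.cfc, Unitary.conjStarAlgAut_apply,
    trace_unitary_conj, Matrix.trace_diagonal]
  simp [Function.comp_def]

lemma psd_diag_re_nonneg {N : Matrix (Fin n) (Fin n) ℂ} (hN : N.PosSemidef) (i : Fin n) :
    0 ≤ (N i i).re := by
  have := hN.re_dotProduct_nonneg (Pi.single i 1)
  simpa [dotProduct, Matrix.mulVec, Pi.single_apply] using this

/-- key duality bound: if `-1 ≤ S ≤ 1` then `Re tr (S M) ≤ ‖M‖₁` for Hermitian `M`. -/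
lemma re_trace_le_traceNorm {M S : Matrix (Fin n) (Fin n) ℂ} (hM : M.IsHermitian)
    (h1 : (1 - S).PosSemidef) (h2 : (1 + S).PosSemidef) :
    (Matrix.trace (S * M)).re ≤ traceNorm M := by
  set U := hM.eigenvectorUnitary with hU
  set μ := hM.eigenvalues
  set T : Matrix (Fin n) (Fin n) ℂ :=
    star (U : Matrix (Fin n) (Fin n) ℂ) * S * (U : Matrix (Fin n) (Fin n) ℂ) with hT
  have habs : ∀ i, |(T i i).re| ≤ 1 := by
    intro i
    have hc1 : ((1 : Matrix (Fin n) (Fin n) ℂ) - T).PosSemidef := by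
      have : (1 : Matrix (Fin n) (Fin n) ℂ) - T =
          star (U : Matrix (Fin n) (Fin n) ℂ) * (1 - S) * (U : Matrix (Fin n) (Fin n) ℂ) := by
        rw [Matrix.mul_sub, Matrix.sub_mul, Matrix.mul_one,
          Matrix.mem_unitaryGroup_iff'.mp U.2, hT]
      rw [this, Matrix.star_eq_conjTranspose]
      exact h1.conjTranspose_mul_mul_same _
    have hc2 : ((1 : Matrix (Fin n) (Fin n) ℂ) + T).PosSemidef := by
      have : (1 : Matrix (Fin n) (Fin n) ℂ) + T =
          star (U : Matrix (Fin n) (Fin n) ℂ) * (1 + S) * (U : Matrix (Fin n) (Fin n) ℂ) := by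
        rw [Matrix.mul_add, Matrix.add_mul, Matrix.mul_one,
          Matrix.mem_unitaryGroup_iff'.mp U.2, hT]
      rw [this, Matrix.star_eq_conjTranspose]
      exact h2.conjTranspose_mul_mul_same _
    have e1 := psd_diag_re_nonneg hc1 i
    have e2 := psd_diag_re_nonneg hc2 i
    rw [abs_le]
    constructor
    · have : 0 ≤ 1 + (T i i).re := by simpa [Matrix.one_apply_eq] using e2
      linarith
    · have : 0 ≤ 1 - (T i i).re := by simpa [Matrix.one_apply_eq] using e1
      linarith
  have htr : Matrix.trace (S * M) = ∑ i, T i i * ((μ i : ℝ) : ℂ) := by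
    conv_lhs => rw [hM.spectral_theorem, Unitary.conjStarAlgAut_apply]
    rw [← Matrix.mul_assoc, ← Matrix.mul_assoc, Matrix.trace_mul_cycle]
    rw [Matrix.trace]
    refine Finset.sum_congr rfl fun i _ => ?_
    rw [Matrix.diag_apply, Matrix.mul_diagonal, hT, Matrix.mul_assoc]
    rfl
  rw [htr, traceNorm_herm hM]
  rw [Complex.re_sum]
  refine Finset.sum_le_sum fun i _ => ?_
  have : (T i i * ((μ i : ℝ) : ℂ)).re = (T i i).re * μ i := by
    simp [Complex.mul_re]
  rw [this]
  calc (T i i).re * μ i ≤ |(T i i).re * μ i| := le_abs_self _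
    _ = |(T i i).re| * |μ i| := abs_mul _ _
    _ ≤ 1 * |μ i| := mul_le_mul_of_nonneg_right (habs i) (abs_nonneg _)
    _ = |μ i| := one_mul _

/-- attainment: the sign matrix achieves the trace norm. -/
lemma exists_sign_matrix {M : Matrix (Fin n) (Fin n) ℂ} (hM : M.IsHermitian) :
    ∃ S : Matrix (Fin n) (Fin n) ℂ, (1 - S).PosSemidef ∧ (1 + S).PosSemidef ∧
      (Matrix.trace (S * M)).re = traceNorm M := by
  classical
  set U := hM.eigenvectorUnitary with hU
  set μ := hM.eigenvalues
  set s : Fin n → ℝ := fun i => if 0 ≤ μ i then 1 else -1 with hs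
  refine ⟨(U : Matrix (Fin n) (Fin n) ℂ) * Matrix.diagonal (fun i => ((s i : ℝ) : ℂ)) *
    star (U : Matrix (Fin n) (Fin n) ℂ), ?_, ?_, ?_⟩
  · have : (1 : Matrix (Fin n) (Fin n) ℂ) -
        (U : Matrix (Fin n) (Fin n) ℂ) * Matrix.diagonal (fun i => ((s i : ℝ) : ℂ)) *
          star (U : Matrix (Fin n) (Fin n) ℂ) =
        (U : Matrix (Fin n) (Fin n) ℂ) * Matrix.diagonal (fun i => ((1 - s i : ℝ) : ℂ)) *
          star (U : Matrix (Fin n) (Fin n) ℂ) := by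
      have hd : Matrix.diagonal (fun i => ((1 - s i : ℝ) : ℂ)) =
          1 - Matrix.diagonal (fun i => ((s i : ℝ) : ℂ)) := by
        rw [← Matrix.diagonal_one, Matrix.diagonal_sub]
        congr 1
        funext i
        push_cast
        ring
      rw [hd, Matrix.mul_sub, Matrix.sub_mul, Matrix.mul_one,
        Matrix.mem_unitaryGroup_iff.mp U.2]
    rw [this]
    refine conj_psd U (Matrix.posSemidef_diagonal_iff.mpr fun i => Complex.zero_le_real.mpr ?_)
    rw [hs]
    dsimp only
    split <;> norm_num
  · have : (1 : Matrix (Fin n) (Fin n) ℂ) +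
        (U : Matrix (Fin n) (Fin n) ℂ) * Matrix.diagonal (fun i => ((s i : ℝ) : ℂ)) *
          star (U : Matrix (Fin n) (Fin n) ℂ) =
        (U : Matrix (Fin n) (Fin n) ℂ) * Matrix.diagonal (fun i => ((1 + s i : ℝ) : ℂ)) *
          star (U : Matrix (Fin n) (Fin n) ℂ) := by
      have hd : Matrix.diagonal (fun i => ((1 + s i : ℝ) : ℂ)) =
          1 + Matrix.diagonal (fun i => ((s i : ℝ) : ℂ)) := by
        rw [← Matrix.diagonal_one, Matrix.diagonal_add]
        congr 1
        funext i
        push_cast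
        ring
      rw [hd, Matrix.mul_add, Matrix.add_mul, Matrix.mul_one,
        Matrix.mem_unitaryGroup_iff.mp U.2]
    rw [this]
    refine conj_psd U (Matrix.posSemidef_diagonal_iff.mpr fun i => Complex.zero_le_real.mpr ?_)
    rw [hs]
    dsimp only
    split <;> norm_num
  · conv_lhs => rw [hM.spectral_theorem, Unitary.conjStarAlgAut_apply]
    rw [show (U : Matrix (Fin n) (Fin n) ℂ) * Matrix.diagonal (fun i => ((s i : ℝ) : ℂ)) *
          star (U : Matrix (Fin n) (Fin n) ℂ) *
          ((hM.eigenvectorUnitary : Matrix (Fin n) (Fin n) ℂ) *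
            Matrix.diagonal (RCLike.ofReal ∘ hM.eigenvalues) *
            star (hM.eigenvectorUnitary : Matrix (Fin n) (Fin n) ℂ)) =
        (U : Matrix (Fin n) (Fin n) ℂ) *
          (Matrix.diagonal (fun i => ((s i : ℝ) : ℂ)) *
            Matrix.diagonal (RCLike.ofReal ∘ hM.eigenvalues)) *
          star (U : Matrix (Fin n) (Fin n) ℂ) from conj_mul_conj U _ _]
    rw [Matrix.diagonal_mul_diagonal, trace_unitary_conj, Matrix.trace_diagonal,
      traceNorm_herm hM]
    have : ∀ i, ((s i : ℝ) : ℂ) * (RCLike.ofReal ∘ hM.eigenvalues) i = ((|μ i| : ℝ) : ℂ) := by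
      intro i
      have : s i * μ i = |μ i| := by
        rw [hs]
        dsimp only
        split
        · rw [one_mul, abs_of_nonneg ‹_›]
        · rw [neg_one_mul, abs_of_neg (lt_of_not_ge ‹_›)]
      calc ((s i : ℝ) : ℂ) * (RCLike.ofReal ∘ hM.eigenvalues) i = ((s i * μ i : ℝ) : ℂ) := by
            push_cast; rfl
        _ = ((|μ i| : ℝ) : ℂ) := by rw [this]
    simp_rw [this]
    rw [← Complex.ofReal_sum]
    exact Complex.ofReal_re _

lemma traceNorm_nonneg_herm {M : Matrix (Fin n) (Fin n) ℂ} (hM : M.IsHermitian) :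
    0 ≤ traceNorm M := by
  rw [traceNorm_herm hM]
  exact Finset.sum_nonneg fun i _ => abs_nonneg _

lemma sum_sq_eigenvalues_eq {M : Matrix (Fin n) (Fin n) ℂ} (hM : M.IsHermitian) :
    ∑ i, hM.eigenvalues i ^ 2 = ∑ i, ∑ j, ‖M i j‖ ^ 2 := by
  have h1 : Matrix.trace (M * M) = ((∑ i, hM.eigenvalues i ^ 2 : ℝ) : ℂ) := by
    conv_lhs => rw [hM.spectral_theorem, Unitary.conjStarAlgAut_apply]
    rw [conj_mul_conj, Matrix.diagonal_mul_diagonal, trace_unitary_conj, Matrix.trace_diagonal]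
    push_cast
    refine Finset.sum_congr rfl fun i _ => ?_
    simp [Function.comp, pow_two]
  have h2 : Matrix.trace (M * M) = ((∑ i, ∑ j, ‖M i j‖ ^ 2 : ℝ) : ℂ) := by
    rw [Matrix.trace]
    push_cast
    refine Finset.sum_congr rfl fun i _ => ?_
    rw [Matrix.diag_apply, Matrix.mul_apply]
    refine Finset.sum_congr rfl fun j _ => ?_
    rw [(congrFun (congrFun hM.eq j) i).symm.trans (Matrix.conjTranspose_apply M i j)]
    rw [Complex.star_def, Complex.mul_conj]
    rw [Complex.normSq_eq_norm_sq]
    norm_cast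
  have := h1.symm.trans h2
  exact_mod_cast this

lemma traceNorm_le_frob {M : Matrix (Fin n) (Fin n) ℂ} (hM : M.IsHermitian) :
    traceNorm M ≤ Real.sqrt (n * ∑ i, ∑ j, ‖M i j‖ ^ 2) := by
  rw [traceNorm_herm hM]
  have h0 : (0:ℝ) ≤ ∑ i, |hM.eigenvalues i| := Finset.sum_nonneg fun i _ => abs_nonneg _
  rw [← Real.sqrt_sq h0]
  apply Real.sqrt_le_sqrt
  calc (∑ i, |hM.eigenvalues i|) ^ 2
      ≤ (Finset.univ : Finset (Fin n)).card * ∑ i, |hM.eigenvalues i| ^ 2 :=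
        sq_sum_le_card_mul_sum_sq
    _ = n * ∑ i, hM.eigenvalues i ^ 2 := by
        simp [sq_abs]
    _ = n * ∑ i, ∑ j, ‖M i j‖ ^ 2 := by rw [sum_sq_eigenvalues_eq hM]

lemma traceNorm_triangle_sub {A B : Matrix (Fin n) (Fin n) ℂ}
    (hA : A.IsHermitian) (hB : B.IsHermitian) :
    traceNorm A ≤ traceNorm B + traceNorm (A - B) := by
  obtain ⟨S, h1, h2, hattain⟩ := exists_sign_matrix hA
  have hsplit : S * A = S * B + S * (A - B) := by rw [← Matrix.mul_add, add_sub_cancel]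
  have : (Matrix.trace (S * A)).re = (Matrix.trace (S * B)).re +
      (Matrix.trace (S * (A - B))).re := by
    rw [hsplit, Matrix.trace_add, Complex.add_re]
  rw [← hattain, this]
  exact add_le_add (re_trace_le_traceNorm hB h1 h2)
    (re_trace_le_traceNorm (hA.sub hB) h1 h2)

section Pinch
variable {k : ℕ} (P : Fin k → Matrix (Fin n) (Fin n) ℂ)

lemma CP_herm (hPherm : ∀ j, (P j).IsHermitian) {M : Matrix (Fin n) (Fin n) ℂ}
    (hM : M.IsHermitian) : (∑ j, P j * M * P j).IsHermitian := by
  unfold Matrix.IsHermitian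
  rw [Matrix.conjTranspose_sum]
  refine Finset.sum_congr rfl fun j _ => ?_
  rw [Matrix.conjTranspose_mul, Matrix.conjTranspose_mul, (hPherm j).eq, hM.eq, Matrix.mul_assoc]

lemma CP_psd (hPherm : ∀ j, (P j).IsHermitian) {M : Matrix (Fin n) (Fin n) ℂ}
    (hM : M.PosSemidef) : (∑ j, P j * M * P j).PosSemidef := by
  refine Finset.sum_induction _ _ (fun a b ha hb => ha.add hb) ?_ ?_
  · exact Matrix.PosSemidef.zero
  · intro j _
    have := hM.conjTranspose_mul_mul_same (P j)
    rwa [(hPherm j).eq] at this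

lemma CP_one (hPidem : ∀ j, P j * P j = P j) (hPsum : ∑ j, P j = 1) :
    (∑ j, P j * (1 : Matrix (Fin n) (Fin n) ℂ) * P j) = 1 := by
  simp_rw [Matrix.mul_one, hPidem]
  exact hPsum

lemma CP_sub (A B : Matrix (Fin n) (Fin n) ℂ) :
    (∑ j, P j * (A - B) * P j) = (∑ j, P j * A * P j) - (∑ j, P j * B * P j) := by
  rw [← Finset.sum_sub_distrib]
  refine Finset.sum_congr rfl fun j _ => ?_
  rw [Matrix.mul_sub, Matrix.sub_mul]

lemma CP_add (A B : Matrix (Fin n) (Fin n) ℂ) :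
    (∑ j, P j * (A + B) * P j) = (∑ j, P j * A * P j) + (∑ j, P j * B * P j) := by
  rw [← Finset.sum_add_distrib]
  refine Finset.sum_congr rfl fun j _ => ?_
  rw [Matrix.mul_add, Matrix.add_mul]

lemma trace_CP_swap (S M : Matrix (Fin n) (Fin n) ℂ) :
    Matrix.trace (S * ∑ j, P j * M * P j) = Matrix.trace ((∑ j, P j * S * P j) * M) := by
  rw [Matrix.mul_sum, Matrix.sum_mul, Matrix.trace_sum, Matrix.trace_sum]
  refine Finset.sum_congr rfl fun j _ => ?_
  rw [show S * (P j * M * P j) = (S * (P j * M)) * P j by simp only [Matrix.mul_assoc],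
    Matrix.trace_mul_comm, show P j * (S * (P j * M)) = (P j * S * P j) * M by
      rw [Matrix.mul_assoc, Matrix.mul_assoc]]

lemma CP_fixed (D : Matrix (Fin n) (Fin n) ℂ) (hPidem : ∀ j, P j * P j = P j)
    (hPsum : ∑ j, P j = 1) (hPcomm : ∀ j, P j * D = D * P j) :
    (∑ j, P j * D * P j) = D := by
  have : ∀ j, P j * D * P j = D * P j := by
    intro j
    rw [hPcomm j, Matrix.mul_assoc, hPidem j]
  simp_rw [this]
  rw [← Matrix.mul_sum, hPsum, Matrix.mul_one]

end Pinch

/-- If `X : [0,1] → H(n)` is a smooth minimal curve (for the trace norm) joining `0`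
to `D = X(1)`, and `P` is a system of mutually orthogonal projections summing to `I`,
each commuting with `D`, then the pinched curve `t ↦ Σ_j P_j X(t) P_j` is also minimal
joining `0` to `D`: its trace-norm length equals `‖D‖₁`. -/
theorem pinching_preserves_minimal {n k : ℕ}
    (X X' : ℝ → Matrix (Fin n) (Fin n) ℂ)
    (hsmooth : ∀ i j, ContDiff ℝ (⊤ : ℕ∞) fun t => X t i j)
    (hderiv : ∀ t i j, HasDerivAt (fun s => X s i j) (X' t i j) t)
    (hherm : ∀ t, (X t).IsHermitian)
    (h0 : X 0 = 0)
    (hmin : (∫ t in (0:ℝ)..1, traceNorm (X' t)) = traceNorm (X 1))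
    (P : Fin k → Matrix (Fin n) (Fin n) ℂ)
    (hPherm : ∀ j, (P j).IsHermitian)
    (hPidem : ∀ j, P j * P j = P j)
    (hPorth : ∀ i j, i ≠ j → P i * P j = 0)
    (hPsum : ∑ j, P j = 1)
    (hPcomm : ∀ j, P j * X 1 = X 1 * P j) :
    (∫ t in (0:ℝ)..1, traceNorm (∑ j, P j * X' t * P j)) = traceNorm (X 1) := by
  classical
  -- X' t is Hermitian
  have hX'herm : ∀ t, (X' t).IsHermitian := by
    intro t
    have key : ∀ i j : Fin n, X' t j i = star (X' t i j) := by
      intro i j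
      have hc : (fun s => X s j i) = fun s => star (X s i j) := by
        funext s
        rw [← (hherm s).eq, Matrix.conjTranspose_apply, (hherm s).eq]
      have h2 : HasDerivAt (fun s => X s j i) (star (X' t i j)) t := by
        rw [hc]
        exact (hderiv t i j).star
      exact (hderiv t j i).unique h2
    exact Matrix.ext fun i j => by rw [Matrix.conjTranspose_apply, ← key j i]
  -- entries of X' are continuous
  have hX'cont : ∀ i j, Continuous fun t => X' t i j := by
    intro i j
    have he : (fun t => X' t i j) = deriv (fun s => X s i j) :=
      funext fun t => ((hderiv t i j).deriv).symm
    rw [he]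
    exact (hsmooth i j).continuous_deriv (by simp)
  -- the three functions
  set g : ℝ → ℝ := fun t => traceNorm (X' t) with hgdef
  set f : ℝ → ℝ := fun t => traceNorm (∑ j, P j * X' t * P j) with hfdef
  obtain ⟨S₀, hS1, hS2, hS3⟩ := exists_sign_matrix (hherm 1)
  set T : Matrix (Fin n) (Fin n) ℂ := ∑ j, P j * S₀ * P j with hTdef
  set h : ℝ → ℝ := fun t => (Matrix.trace (T * X' t)).re with hhdef
  -- trace re formula
  have htrre : ∀ M : Matrix (Fin n) (Fin n) ℂ,
      (Matrix.trace (T * M)).re = ∑ i, ∑ j, (T i j * M j i).re := by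
    intro M
    rw [Matrix.trace, Complex.re_sum]
    refine Finset.sum_congr rfl fun i _ => ?_
    rw [Matrix.diag_apply, Matrix.mul_apply, Complex.re_sum]
  -- continuity of h
  have hhcont : Continuous h := by
    have : h = fun t => ∑ i, ∑ j, (T i j * X' t j i).re := funext fun t => htrre (X' t)
    rw [this]
    refine continuous_finset_sum _ fun i _ => continuous_finset_sum _ fun j _ => ?_
    exact Complex.continuous_re.comp (continuous_const.mul (hX'cont j i))
  -- continuity of g
  have hgcont : Continuous g := by
    rw [continuous_iff_continuousAt]
    intro s
    rw [ContinuousAt, tendsto_iff_dist_tendsto_zero]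
    have hbound : ∀ t, dist (g t) (g s) ≤
        Real.sqrt (n * ∑ i, ∑ j, ‖X' t i j - X' s i j‖ ^ 2) := by
      intro t
      rw [Real.dist_eq, abs_le]
      have e1 := traceNorm_triangle_sub (hX'herm t) (hX'herm s)
      have e2 := traceNorm_triangle_sub (hX'herm s) (hX'herm t)
      have b1 := traceNorm_le_frob ((hX'herm t).sub (hX'herm s))
      have b2 := traceNorm_le_frob ((hX'herm s).sub (hX'herm t))
      have hs1 : ∀ i j, ‖(X' t - X' s) i j‖ ^ 2 = ‖X' t i j - X' s i j‖ ^ 2 := by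
        intro i j; rw [Matrix.sub_apply]
      have hs2 : ∀ i j, ‖(X' s - X' t) i j‖ ^ 2 = ‖X' t i j - X' s i j‖ ^ 2 := by
        intro i j; rw [Matrix.sub_apply, norm_sub_rev]
      simp_rw [hs1] at b1
      simp_rw [hs2] at b2
      constructor
      · simp only [hgdef] at e2 b2 ⊢
        linarith
      · simp only [hgdef] at e1 b1 ⊢
        linarith
    refine squeeze_zero (fun t => dist_nonneg) hbound ?_
    have hc : Continuous fun t => Real.sqrt (n * ∑ i, ∑ j, ‖X' t i j - X' s i j‖ ^ 2) := by
      refine Real.continuous_sqrt.comp (continuous_const.mul ?_)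
      refine continuous_finset_sum _ fun i _ => continuous_finset_sum _ fun j _ => ?_
      exact (((hX'cont i j).sub continuous_const).norm).pow 2
    have := hc.tendsto s
    simpa using this
  -- FTC: the integral of h
  have hF : ∀ t : ℝ, HasDerivAt (fun u => (Matrix.trace (T * X u)).re)
      ((Matrix.trace (T * X' t)).re) t := by
    intro t
    have heq : (fun u => (Matrix.trace (T * X u)).re)
        = fun u => ∑ i, ∑ j, (T i j * X u j i).re := funext fun u => htrre (X u)
    rw [heq, htrre]
    refine HasDerivAt.fun_sum fun i _ => HasDerivAt.fun_sum fun j _ => ?_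
    have hc := (hderiv t j i).const_mul (T i j)
    exact Complex.reCLM.hasFDerivAt.comp_hasDerivAt t hc
  have hinth : (∫ t in (0:ℝ)..1, h t) = traceNorm (X 1) := by
    have := intervalIntegral.integral_eq_sub_of_hasDerivAt
      (f := fun u => (Matrix.trace (T * X u)).re)
      (f' := fun t => (Matrix.trace (T * X' t)).re)
      (a := 0) (b := 1) (fun t _ => hF t) (hhcont.intervalIntegrable 0 1)
    rw [hhdef]
    rw [this]
    rw [h0, Matrix.mul_zero, Matrix.trace_zero, Complex.zero_re, sub_zero]
    rw [hTdef, ← trace_CP_swap, CP_fixed P (X 1) hPidem hPsum hPcomm, hS3]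
  -- pointwise h ≤ f
  have hhf : ∀ t, h t ≤ f t := by
    intro t
    have : h t = (Matrix.trace (S₀ * ∑ j, P j * X' t * P j)).re := by
      rw [hhdef, hTdef]
      rw [trace_CP_swap]
    rw [this]
    exact re_trace_le_traceNorm (CP_herm P hPherm (hX'herm t)) hS1 hS2
  -- pointwise f ≤ g
  have hfg : ∀ t, f t ≤ g t := by
    intro t
    obtain ⟨St, h1t, h2t, h3t⟩ := exists_sign_matrix (CP_herm P hPherm (hX'herm t))
    have hone := CP_one P hPidem hPsum
    have hm1 : (1 - ∑ j, P j * St * P j).PosSemidef := by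
      have : (1 : Matrix (Fin n) (Fin n) ℂ) - ∑ j, P j * St * P j
          = ∑ j, P j * (1 - St) * P j := by
        rw [CP_sub P 1 St, hone]
      rw [this]
      exact CP_psd P hPherm h1t
    have hm2 : (1 + ∑ j, P j * St * P j).PosSemidef := by
      have : (1 : Matrix (Fin n) (Fin n) ℂ) + ∑ j, P j * St * P j
          = ∑ j, P j * (1 + St) * P j := by
        rw [CP_add P 1 St, hone]
      rw [this]
      exact CP_psd P hPherm h2t
    calc f t = (Matrix.trace (St * ∑ j, P j * X' t * P j)).re := h3t.symm
      _ = (Matrix.trace ((∑ j, P j * St * P j) * X' t)).re := by rw [trace_CP_swap]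
      _ ≤ traceNorm (X' t) := re_trace_le_traceNorm (hX'herm t) hm1 hm2
  -- the sandwich argument
  have hinteg_h : MeasureTheory.IntegrableOn h (Set.Ioc (0:ℝ) 1) :=
    hhcont.integrableOn_Ioc
  have hinteg_g : MeasureTheory.IntegrableOn g (Set.Ioc (0:ℝ) 1) :=
    hgcont.integrableOn_Ioc
  have hint_eq : (∫ t in Set.Ioc (0:ℝ) 1, (g t - h t)) = 0 := by
    rw [MeasureTheory.integral_sub hinteg_g hinteg_h]
    have e1 : (∫ t in Set.Ioc (0:ℝ) 1, g t) = traceNorm (X 1) := by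
      rw [← intervalIntegral.integral_of_le (by norm_num : (0:ℝ) ≤ 1)]
      exact hmin
    have e2 : (∫ t in Set.Ioc (0:ℝ) 1, h t) = traceNorm (X 1) := by
      rw [← intervalIntegral.integral_of_le (by norm_num : (0:ℝ) ≤ 1)]
      exact hinth
    rw [e1, e2, sub_self]
  have hae : (fun t => g t - h t) =ᵐ[MeasureTheory.volume.restrict (Set.Ioc (0:ℝ) 1)] 0 := by
    refine (MeasureTheory.integral_eq_zero_iff_of_nonneg ?_ ?_).mp hint_eq
    · intro t
      have := (hhf t).trans (hfg t)
      simp only [Pi.zero_apply]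
      linarith
    · exact hinteg_g.sub hinteg_h
  have haefg : f =ᵐ[MeasureTheory.volume.restrict (Set.Ioc (0:ℝ) 1)] g := by
    filter_upwards [hae] with t ht
    have h1 := hhf t
    have h2 := hfg t
    simp only [Pi.zero_apply] at ht
    linarith
  rw [show (∫ t in (0:ℝ)..1, traceNorm (∑ j, P j * X' t * P j)) = ∫ t in (0:ℝ)..1, f t from rfl]
  rw [intervalIntegral.integral_of_le (by norm_num : (0:ℝ) ≤ 1),
    MeasureTheory.integral_congr_ae haefg,
    ← intervalIntegral.integral_of_le (by norm_num : (0:ℝ) ≤ 1)]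
  exact hmin
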